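/- Let Q be a ground Horn program, k ∈ ℕ and 0 ≤ d ≤ k. Then: (i) the annotated atom (p^{=d}, a) is derivable in Q^{≤k} if and only if (p, a) has a derivation tree in Q of dimension exactly d; (ii) the annotated atom (p^{≤d}, a) is derivable in Q^{≤k} if and only if (p, a) has a derivation tree in Q of dimension at most d. -/

import Mathlib

/-- A labeled tree: a node carries a label and a (possibly empty) list of children. -/
inductive LTree (L : Type) : Type where
  | node : L → List (LTree L) → LTree L

namespace LTree

/-- The tree dimension: `0` for a leaf; otherwise the maximum `m` of the children's
dimensions if exactly one child attains `m`, and `m + 1` otherwise. -/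
def dim {L : Type} : LTree L → ℕ
  | node _ ts =>
    let ds := ts.attach.map fun x => dim x.1
    if ds = [] then 0
    else
      let m := ds.foldr max 0
      if ds.count m = 1 then m else m + 1
termination_by t => sizeOf t
decreasing_by
  have := List.sizeOf_lt_of_mem x.2
  simp_wf
  omega

end LTree

/-- A ground atom: a predicate symbol together with an argument tuple. -/
abbrev GAtom (P A : Type) := P × A

/-- A ground Horn rule: a head atom together with a finite list of body atoms. -/
abbrev GRule (P A : Type) := GAtom P A × List (GAtom P A)

/-- An atom is derivable in a ground Horn program `Q` if it is the head of a rule of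
`Q` all of whose body atoms are derivable. -/
inductive Derivable {P A : Type} (Q : Set (GRule P A)) : GAtom P A → Prop
  | intro (r : GRule P A) (hr : r ∈ Q) (hb : ∀ b ∈ r.2, Derivable Q b) :
      Derivable Q r.1

/-- `IsDeriv Q h T` : `T` is a derivation tree for the atom `h` in `Q`: its root label
is a rule `(h, [b₁,…,b_r]) ∈ Q` and its `r` children are derivation trees for
`b₁,…,b_r` in `Q`, respectively. -/
inductive IsDeriv {P A : Type} (Q : Set (GRule P A)) :
    GAtom P A → LTree (GRule P A) → Prop
  | node (r : GRule P A) (ts : List (LTree (GRule P A))) :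
      r ∈ Q → List.Forall₂ (IsDeriv Q) r.2 ts → IsDeriv Q r.1 (.node r ts)

/-- Annotated predicate symbols: `eq p d` stands for `p^{=d}` and `le p d` for `p^{≤d}`. -/
inductive Ann (P : Type) : Type where
  | eq (p : P) (d : ℕ)
  | le (p : P) (d : ℕ)

/-- The at-most-`k`-dimension program `Q^{≤k}` of a ground Horn program `Q`. -/
def kdim {P A : Type} (Q : Set (GRule P A)) (k : ℕ) : Set (GRule (Ann P) A) :=
  { R |
    -- (1) facts
    (∃ p a, ((p, a), ([] : List (GAtom P A))) ∈ Q ∧ R = ((Ann.eq p 0, a), [])) ∨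
    -- (1) linear rules
    (∃ p a q b d, d ≤ k ∧ ((p, a), [(q, b)]) ∈ Q ∧
      R = ((Ann.eq p d, a), [(Ann.eq q d, b)])) ∨
    -- (2a)
    (∃ p a B d j, ((p, a), B) ∈ Q ∧ 1 < B.length ∧ 1 ≤ d ∧ d ≤ k ∧ j < B.length ∧
      R = ((Ann.eq p d, a),
        (B.zipIdx.map Prod.swap).map fun x =>
          (if x.1 = j then Ann.eq x.2.1 d else Ann.le x.2.1 (d - 1), x.2.2))) ∨
    -- (2b)
    (∃ p a B d j₁ j₂, ((p, a), B) ∈ Q ∧ 1 < B.length ∧ 1 ≤ d ∧ d ≤ k ∧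
      j₁ < j₂ ∧ j₂ < B.length ∧
      R = ((Ann.eq p d, a),
        (B.zipIdx.map Prod.swap).map fun x =>
          (if x.1 = j₁ ∨ x.1 = j₂ then Ann.eq x.2.1 (d - 1) else Ann.le x.2.1 (d - 1),
            x.2.2))) ∨
    -- (3) ε-rules
    (∃ p a d e, e ≤ d ∧ d ≤ k ∧ R = ((Ann.le p d, a), [(Ann.eq p e, a)])) }

/-- Erase the annotation of an annotated atom. -/
def eraseAtom {P A : Type} : GAtom (Ann P) A → GAtom P A
  | (.eq p _, a) => (p, a)
  | (.le p _, a) => (p, a)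

/-- Erase the annotations of an annotated rule. -/
def eraseRule {P A : Type} (r : GRule (Ann P) A) : GRule P A :=
  (eraseAtom r.1, r.2.map eraseAtom)

/-- A rule of `Q^{≤k}` is an ε-rule precisely when its head predicate carries a
`≤`-annotation. -/
def isEpsRule {P A : Type} (r : GRule (Ann P) A) : Bool :=
  match r.1.1 with
  | .le _ _ => true
  | .eq _ _ => false

/-- The erasure of a derivation tree of `Q^{≤k}`: an ε-rule node (recognisable by its
`≤`-annotated head, and having exactly one child) is replaced by the erasure of its
child; at every other node the annotations of the rule labelling it are erased and the
children are erased recursively, in order. -/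
def erase {P A : Type} : LTree (GRule (Ann P) A) → LTree (GRule P A)
  | .node r ts =>
    if h : isEpsRule r ∧ ts.length = 1 then
      erase (ts.head (by rcases h with ⟨-, h2⟩; exact List.ne_nil_of_length_pos (by omega)))
    else .node (eraseRule r) (ts.attach.map fun x => erase x.1)
termination_by t => sizeOf t
decreasing_by
  · simp_wf
    have := List.sizeOf_lt_of_mem (List.head_mem (l := ts)
      (by rcases h with ⟨-, h2⟩; exact List.ne_nil_of_length_pos (by omega)))
    omega
  · have := List.sizeOf_lt_of_mem x.2
    simp_wf
    omega

/-! Read `(p^{=d}, a)` as "`(p, a)` has a derivation tree of dimension `d`" and `(p^{≤d}, a)` as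
"… of dimension at most `d`". Every rule of `Q^{≤k}` is sound for this reading: a node with at
least two children has dimension `d` exactly when either one child has dimension `d` and all
others have dimension `< d` (rule (2a)), or two children have dimension `d - 1` and none more
(rule (2b)). Conversely, recursing on a derivation tree of dimension `≤ k`, the root's rule and
the dimensions of its children select the rule of kind (1), (2a) or (2b) deriving the root; the
children that are not singled out are lifted to their `≤`-annotation by an ε-rule. -/

theorem List.count_getElem_eq_one_iff {α : Type} [BEq α] [LawfulBEq α] {l : List α} {j : ℕ}
    (hj : j < l.length) : l.count l[j] = 1 ↔ ∀ i (hi : i < l.length), i ≠ j → l[i] ≠ l[j] := by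
  rw [← (List.getElem_cons_eraseIdx_perm hj).count_eq, List.count_cons_self,
    Nat.add_eq_right, List.count_eq_zero, List.mem_eraseIdx_iff_getElem]
  simp only [not_exists, not_and]

namespace LTree

def nodeDim (ds : List ℕ) : ℕ :=
  if ds = [] then 0
  else if ds.count (ds.foldr max 0) = 1 then ds.foldr max 0 else ds.foldr max 0 + 1

variable {L : Type}

theorem dim_node (r : L) (ts : List (LTree L)) : (node r ts).dim = nodeDim (ts.map dim) := by
  rw [dim, List.map_attach_eq_pmap, List.pmap_eq_map]
  rfl

theorem le_nodeDim {ds : List ℕ} {x : ℕ} (hx : x ∈ ds) : x ≤ nodeDim ds := by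
  have : x ≤ ds.foldr max 0 := List.le_max_of_le hx le_rfl
  rw [nodeDim, if_neg (List.ne_nil_of_mem hx)]
  split_ifs <;> omega

theorem nodeDim_of_unique {ds : List ℕ} {j : ℕ} (hj : j < ds.length)
    (hlt : ∀ i (hi : i < ds.length), i ≠ j → ds[i] < ds[j]) : nodeDim ds = ds[j] := by
  have hmax : ds.foldr max 0 = ds[j] :=
    le_antisymm (List.max_le_of_forall_le _ _ fun x hx => by
      obtain ⟨i, hi, rfl⟩ := List.mem_iff_getElem.mp hx
      rcases eq_or_ne i j with rfl | hij
      exacts [le_rfl, (hlt i hi hij).le])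
      (List.le_max_of_le (List.getElem_mem hj) le_rfl)
  have hcount : ds.count ds[j] = 1 :=
    (List.count_getElem_eq_one_iff hj).mpr fun i hi hij => (hlt i hi hij).ne
  rw [nodeDim, if_neg (List.ne_nil_of_length_pos (by omega)), hmax, if_pos hcount]

theorem nodeDim_singleton (x : ℕ) : nodeDim [x] = x :=
  nodeDim_of_unique (j := 0) (by simp) (by simp)

theorem nodeDim_of_two {ds : List ℕ} {i j : ℕ} (hi : i < ds.length) (hj : j < ds.length)
    (hij : i ≠ j) (heq : ds[i] = ds[j]) (hle : ∀ x ∈ ds, x ≤ ds[j]) :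
    nodeDim ds = ds[j] + 1 := by
  have hmax : ds.foldr max 0 = ds[j] :=
    le_antisymm (List.max_le_of_forall_le _ _ hle) (List.le_max_of_le (List.getElem_mem hj) le_rfl)
  have hcount : ds.count ds[j] ≠ 1 := fun h =>
    (List.count_getElem_eq_one_iff hj).mp h i hi hij heq
  rw [nodeDim, if_neg (List.ne_nil_of_length_pos (by omega)), hmax, if_neg hcount]

theorem nodeDim_cases {ds : List ℕ} (hds : ds ≠ []) :
    (∃ j, ∃ hj : j < ds.length, ∀ i (hi : i < ds.length), i ≠ j → ds[i] < ds[j]) ∨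
    (∃ i j, ∃ (hi : i < ds.length) (hj : j < ds.length),
      i < j ∧ ds[i] = ds[j] ∧ ∀ x ∈ ds, x ≤ ds[j]) := by
  obtain ⟨⟨j, hj⟩, -, hmax⟩ := Finset.exists_max_image Finset.univ (fun j : Fin ds.length => ds[j])
    (Finset.univ_nonempty_iff.mpr ⟨⟨0, List.length_pos_iff.mpr hds⟩⟩)
  have hle : ∀ x ∈ ds, x ≤ ds[j] :=
    List.forall_mem_iff_getElem.mpr fun i hi => hmax ⟨i, hi⟩ (Finset.mem_univ _)
  by_cases htie : ∃ i, ∃ hi : i < ds.length, i ≠ j ∧ ds[i] = ds[j]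
  · obtain ⟨i, hi, hij, heq⟩ := htie
    rcases hij.lt_or_gt with hij | hij
    · exact Or.inr ⟨i, j, hi, hj, hij, heq, hle⟩
    · exact Or.inr ⟨j, i, hj, hi, hij, heq.symm, heq ▸ hle⟩
  · push Not at htie
    exact Or.inl ⟨j, hj, fun i hi hij => (hle _ (List.getElem_mem hi)).lt_of_ne (htie i hi hij)⟩

end LTree

open LTree

section

variable {P A : Type} {Q : Set (GRule P A)} {k : ℕ} {h : GAtom P A} {B : List (GAtom P A)}

def annotateBody (B : List (GAtom P A)) (f : ℕ → P → Ann P) : List (GAtom (Ann P) A) :=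
  (B.zipIdx.map Prod.swap).map fun x => (f x.1 x.2.1, x.2.2)

theorem forall_mem_annotateBody {f : ℕ → P → Ann P} {R : GAtom (Ann P) A → Prop} :
    (∀ b ∈ annotateBody B f, R b) ↔ ∀ i (hi : i < B.length), R (f i B[i].1, B[i].2) := by
  rw [annotateBody, List.forall_mem_iff_getElem]
  simp [List.getElem_zipIdx]

theorem fact_mem_kdim {p : P} {a : A} (hr : ((p, a), []) ∈ Q) :
    ((Ann.eq p 0, a), []) ∈ kdim Q k :=
  Or.inl ⟨p, a, hr, rfl⟩

theorem linear_mem_kdim {b : GAtom P A} {d : ℕ} (hr : (h, [b]) ∈ Q) (hd : d ≤ k) :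
    ((Ann.eq h.1 d, h.2), [(Ann.eq b.1 d, b.2)]) ∈ kdim Q k :=
  Or.inr <| Or.inl ⟨h.1, h.2, b.1, b.2, d, hd, hr, rfl⟩

theorem uniqueMax_mem_kdim {d j : ℕ} (hr : (h, B) ∈ Q)
    (hB : 1 < B.length) (hd : 1 ≤ d) (hdk : d ≤ k) (hj : j < B.length) :
    ((Ann.eq h.1 d, h.2),
      annotateBody B fun i q => if i = j then Ann.eq q d else Ann.le q (d - 1)) ∈ kdim Q k :=
  Or.inr <| Or.inr <| Or.inl ⟨h.1, h.2, B, d, j, hr, hB, hd, hdk, hj, rfl⟩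

theorem twoMax_mem_kdim {d j₁ j₂ : ℕ} (hr : (h, B) ∈ Q)
    (hB : 1 < B.length) (hd : 1 ≤ d) (hdk : d ≤ k) (h12 : j₁ < j₂) (hj₂ : j₂ < B.length) :
    ((Ann.eq h.1 d, h.2), annotateBody B fun i q =>
      if i = j₁ ∨ i = j₂ then Ann.eq q (d - 1) else Ann.le q (d - 1)) ∈ kdim Q k :=
  Or.inr <| Or.inr <| Or.inr <| Or.inl ⟨h.1, h.2, B, d, j₁, j₂, hr, hB, hd, hdk, h12, hj₂, rfl⟩

theorem eps_mem_kdim {p : P} {a : A} {d e : ℕ} (hed : e ≤ d) (hdk : d ≤ k) :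
    ((Ann.le p d, a), [(Ann.eq p e, a)]) ∈ kdim Q k :=
  Or.inr <| Or.inr <| Or.inr <| Or.inr ⟨p, a, d, e, hed, hdk, rfl⟩

theorem Derivable.annLe_of_annEq {p : P} {a : A} {d e : ℕ}
    (he : Derivable (kdim Q k) (Ann.eq p e, a)) (hed : e ≤ d) (hdk : d ≤ k) :
    Derivable (kdim Q k) (Ann.le p d, a) :=
  .intro _ (eps_mem_kdim hed hdk) (by simpa using he)

def Witnessed (Q : Set (GRule P A)) : GAtom (Ann P) A → Prop
  | (.eq p d, a) => ∃ T, IsDeriv Q (p, a) T ∧ T.dim = d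
  | (.le p d, a) => ∃ T, IsDeriv Q (p, a) T ∧ T.dim ≤ d

theorem exists_isDeriv_of_children (hr : (h, B) ∈ Q)
    {S : ℕ → ℕ → Prop} (hB : ∀ i (hi : i < B.length), ∃ T, IsDeriv Q B[i] T ∧ S i T.dim) :
    ∃ ds : List ℕ, ds.length = B.length ∧ (∀ i (hi : i < ds.length), S i ds[i]) ∧
      ∃ T, IsDeriv Q h T ∧ T.dim = nodeDim ds := by
  choose g hg using fun i : Fin B.length => hB i i.2
  refine ⟨List.ofFn (dim ∘ g), by simp, fun i hi => ?_, .node (h, B) (List.ofFn g),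
    .node _ _ hr ?_, by rw [dim_node, List.map_ofFn]⟩
  · simpa using (hg ⟨i, by simpa using hi⟩).2
  · exact List.forall₂_iff_get.mpr ⟨by simp, fun i hi _ => by simpa using (hg ⟨i, hi⟩).1⟩

theorem Witnessed.of_uniqueMax {d j : ℕ} (hr : (h, B) ∈ Q)
    (hd : 1 ≤ d) (hj : j < B.length)
    (hB : ∀ b ∈ annotateBody B (fun i q => if i = j then Ann.eq q d else Ann.le q (d - 1)),
      Witnessed Q b) :
    Witnessed Q (Ann.eq h.1 d, h.2) := by
  obtain ⟨ds, hlen, hds, T, hT, hdim⟩ := exists_isDeriv_of_children hr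
    (S := fun i e => if i = j then e = d else e ≤ d - 1) fun i hi => by
      have := forall_mem_annotateBody.mp hB i hi
      split_ifs at this ⊢ <;> exact this
  have hdj : ds[j] = d := by simpa using hds j (by omega)
  refine ⟨T, hT, hdim.trans ?_⟩
  rw [nodeDim_of_unique (by omega : j < ds.length) fun i hi hij => ?_, hdj]
  have := hds i hi
  rw [if_neg hij] at this
  omega

theorem Witnessed.of_twoMax {d j₁ j₂ : ℕ}
    (hr : (h, B) ∈ Q) (hd : 1 ≤ d) (h12 : j₁ < j₂) (hj₂ : j₂ < B.length)
    (hB : ∀ b ∈ annotateBody B (fun i q =>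
      if i = j₁ ∨ i = j₂ then Ann.eq q (d - 1) else Ann.le q (d - 1)), Witnessed Q b) :
    Witnessed Q (Ann.eq h.1 d, h.2) := by
  obtain ⟨ds, hlen, hds, T, hT, hdim⟩ := exists_isDeriv_of_children hr
    (S := fun i e => e ≤ d - 1 ∧ (i = j₁ ∨ i = j₂ → e = d - 1)) fun i hi => by
      have := forall_mem_annotateBody.mp hB i hi
      split_ifs at this with hi
      · obtain ⟨T, hT, hdim⟩ := this
        exact ⟨T, hT, hdim.le, fun _ => hdim⟩
      · obtain ⟨T, hT, hdim⟩ := this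
        exact ⟨T, hT, hdim, fun hJ => absurd hJ hi⟩
  have h₁ := (hds j₁ (by omega)).2 (.inl rfl)
  have h₂ := (hds j₂ (by omega)).2 (.inr rfl)
  refine ⟨T, hT, hdim.trans ?_⟩
  rw [nodeDim_of_two (i := j₁) (by omega) (by omega) h12.ne (h₁.trans h₂.symm) fun x hx => ?_, h₂]
  · omega
  · obtain ⟨i, hi, rfl⟩ := List.mem_iff_getElem.mp hx
    exact h₂ ▸ (hds i hi).1

theorem Derivable.witnessed {x : GAtom (Ann P) A} (hx : Derivable (kdim Q k) x) :
    Witnessed Q x := by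
  induction hx with
  | intro R hR _ ih =>
  rcases hR with ⟨p, a, hQ, rfl⟩ | ⟨p, a, q, b, d, -, hQ, rfl⟩ |
    ⟨p, a, B, d, j, hQ, -, hd, -, hj, rfl⟩ | ⟨p, a, B, d, j₁, j₂, hQ, -, hd, -, h12, hj₂, rfl⟩ |
    ⟨p, a, d, e, hed, -, rfl⟩
  · exact ⟨.node _ [], .node _ _ hQ .nil, by rw [dim_node]; rfl⟩
  · obtain ⟨T, hT, rfl⟩ := ih _ List.mem_cons_self
    exact ⟨.node _ [T], .node _ _ hQ (.cons hT .nil), by rw [dim_node]; exact nodeDim_singleton _⟩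
  · exact Witnessed.of_uniqueMax (h := (p, a)) hQ hd hj ih
  · exact Witnessed.of_twoMax (h := (p, a)) hQ hd h12 hj₂ ih
  · obtain ⟨T, hT, rfl⟩ := ih _ List.mem_cons_self
    exact ⟨T, hT, hed⟩

theorem derivable_of_uniqueMax {ds : List ℕ} (hr : (h, B) ∈ Q) (hB : 1 < B.length)
    (hlen : B.length = ds.length)
    (hds : ∀ i (hi : i < B.length) (hi' : i < ds.length),
      Derivable (kdim Q k) (Ann.eq B[i].1 ds[i], B[i].2))
    {j : ℕ} (hj : j < ds.length) (hlt : ∀ i (hi : i < ds.length), i ≠ j → ds[i] < ds[j])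
    (hk : ds[j] ≤ k) : Derivable (kdim Q k) (Ann.eq h.1 ds[j], h.2) := by
  have hd : 1 ≤ ds[j] := by
    obtain ⟨i, hi, hij⟩ : ∃ i < ds.length, i ≠ j :=
      ⟨if j = 0 then 1 else 0, by split_ifs <;> omega, by split_ifs <;> omega⟩
    have := hlt i hi hij
    omega
  refine .intro _ (uniqueMax_mem_kdim (j := j) hr hB hd hk (by omega)) ?_
  dsimp only
  refine forall_mem_annotateBody.mpr fun i hi => ?_
  split_ifs with hij
  · subst hij
    exact hds i hi hj
  · exact (hds i hi (by omega)).annLe_of_annEq (by have := hlt i (by omega) hij; omega) (by omega)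

theorem derivable_of_twoMax {ds : List ℕ} (hr : (h, B) ∈ Q) (hB : 1 < B.length)
    (hlen : B.length = ds.length)
    (hds : ∀ i (hi : i < B.length) (hi' : i < ds.length),
      Derivable (kdim Q k) (Ann.eq B[i].1 ds[i], B[i].2))
    {j₁ j₂ : ℕ} (h12 : j₁ < j₂) (hj₂ : j₂ < ds.length)
    (heq : ds[j₁] = ds[j₂]) (hle : ∀ x ∈ ds, x ≤ ds[j₂]) (hk : ds[j₂] + 1 ≤ k) :
    Derivable (kdim Q k) (Ann.eq h.1 (ds[j₂] + 1), h.2) := by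
  refine .intro _ (twoMax_mem_kdim hr hB le_add_self hk h12 (by omega)) ?_
  dsimp only
  refine forall_mem_annotateBody.mpr fun i hi => ?_
  rw [Nat.add_sub_cancel]
  split_ifs with hij
  · rcases hij with rfl | rfl
    · exact heq ▸ hds i hi (by omega)
    · exact hds i hi hj₂
  · exact (hds i hi (by omega)).annLe_of_annEq (hle _ (List.getElem_mem _)) (by omega)

theorem derivable_of_rule {ds : List ℕ} (hr : (h, B) ∈ Q)
    (hds : B.Forall₂ (fun b e => Derivable (kdim Q k) (Ann.eq b.1 e, b.2)) ds)
    (hk : nodeDim ds ≤ k) : Derivable (kdim Q k) (Ann.eq h.1 (nodeDim ds), h.2) := by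
  obtain ⟨hlen, hds'⟩ := List.forall₂_iff_get.mp hds
  simp only [List.get_eq_getElem] at hds'
  rcases hds with _ | @⟨b, e, _, _, hb, hds⟩
  · exact .intro _ (fact_mem_kdim hr) (by simp)
  rcases hds with _ | ⟨-, -⟩
  · rw [nodeDim_singleton] at hk ⊢
    exact .intro _ (linear_mem_kdim hr hk) (by simpa using hb)
  rcases nodeDim_cases (ds := e :: _) (by simp) with ⟨j, hj, hlt⟩ | ⟨i, j, hi, hj, hij, heq, hle⟩
  · rw [nodeDim_of_unique hj hlt] at hk ⊢
    exact derivable_of_uniqueMax hr (by simp) hlen hds' hj hlt hk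
  · rw [nodeDim_of_two hi hj hij.ne heq hle] at hk ⊢
    exact derivable_of_twoMax hr (by simp) hlen hds' hij hj heq hle hk

theorem IsDeriv.derivable_kdim : ∀ {x : GAtom P A} {T : LTree (GRule P A)}, IsDeriv Q x T →
    T.dim ≤ k → Derivable (kdim Q k) (Ann.eq x.1 T.dim, x.2)
  | _, _, .node r ts hr hts, hk => by
    rw [dim_node] at hk ⊢
    refine derivable_of_rule hr (List.forall₂_map_right_iff.mpr ?_) hk
    obtain ⟨hlen, hts⟩ := List.forall₂_iff_get.mp hts
    refine List.forall₂_iff_get.mpr ⟨hlen, fun i hi hi' => ?_⟩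
    have hmem : ts[i] ∈ ts := List.getElem_mem hi'
    exact (hts i hi hi').derivable_kdim
      ((le_nodeDim (List.mem_map_of_mem hmem)).trans hk)
termination_by _ T => sizeOf T
decreasing_by
  have := List.sizeOf_lt_of_mem hmem
  simp_wf
  omega

end

/-- Let `Q` be a ground Horn program, `k ∈ ℕ` and `0 ≤ d ≤ k`. Then: (i) the
annotated atom `(p^{=d}, a)` is derivable in `Q^{≤k}` if and only if `(p, a)` has a
derivation tree in `Q` of dimension exactly `d`; (ii) the annotated atom
`(p^{≤d}, a)` is derivable in `Q^{≤k}` if and only if `(p, a)` has a derivation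
tree in `Q` of dimension at most `d`. -/
theorem derivable_kdim_iff {P A : Type} (Q : Set (GRule P A)) (k : ℕ)
    (p : P) (a : A) (d : ℕ) (hd : d ≤ k) :
    (Derivable (kdim Q k) (Ann.eq p d, a) ↔
      ∃ T : LTree (GRule P A), IsDeriv Q (p, a) T ∧ T.dim = d) ∧
    (Derivable (kdim Q k) (Ann.le p d, a) ↔
      ∃ T : LTree (GRule P A), IsDeriv Q (p, a) T ∧ T.dim ≤ d) := by
  refine ⟨⟨Derivable.witnessed, ?_⟩, ⟨Derivable.witnessed, ?_⟩⟩
  · rintro ⟨T, hT, rfl⟩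
    exact hT.derivable_kdim hd
  · rintro ⟨T, hT, hle⟩
    exact (hT.derivable_kdim (hle.trans hd)).annLe_of_annEq hle hd
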